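/- For d ∈ {5, 9}, there is no weighing matrix of order d and weight 4; equivalently, the maximum size of a set of mutually unbiased weighing matrices of order d and weight 4 is 0. -/
import Mathlib


open Matrix

/-- `W` is a weighing matrix of order `d` and weight `k`: a `d × d` real matrix with all
entries in `{-1, 0, 1}` such that `W * Wᵀ = k • 1`. -/
def IsWeighing {d : ℕ} (k : ℝ) (W : Matrix (Fin d) (Fin d) ℝ) : Prop :=
  (∀ i j, W i j = -1 ∨ W i j = 0 ∨ W i j = 1) ∧
    W * Wᵀ = k • (1 : Matrix (Fin d) (Fin d) ℝ)

/-- A family of mutually unbiased weighing matrices of order `d` and weight `k`: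
each member is a weighing matrix of weight `k`, and for distinct members
`(1/√k) • (Wᵢ * Wⱼᵀ)` is again a weighing matrix of weight `k`. -/
def MUWM {d f : ℕ} (k : ℝ) (W : Fin f → Matrix (Fin d) (Fin d) ℝ) : Prop :=
  (∀ i, IsWeighing k (W i)) ∧
    ∀ i j, i ≠ j → IsWeighing k ((Real.sqrt k)⁻¹ • (W i * (W j)ᵀ))

/-- A family of mutually quasi-unbiased weighing matrices for parameters `(d, k, l, a)`:
each member is a weighing matrix of weight `k`, and for distinct members
`(1/√a) • (Wᵢ * Wⱼᵀ)` is a weighing matrix of weight `l`. -/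
def MQUWM {d f : ℕ} (k l a : ℝ) (W : Fin f → Matrix (Fin d) (Fin d) ℝ) : Prop :=
  (∀ i, IsWeighing k (W i)) ∧
    ∀ i j, i ≠ j → IsWeighing l ((Real.sqrt a)⁻¹ • (W i * (W j)ᵀ))

namespace Stmt18Aux

open Finset

variable {d : ℕ}

noncomputable def suppW (W : Matrix (Fin d) (Fin d) ℝ) (i : Fin d) : Finset (Fin d) :=
  Finset.univ.filter (fun c => W i c ≠ 0)

lemma mem_suppW {W : Matrix (Fin d) (Fin d) ℝ} {i c : Fin d} :
    c ∈ suppW W i ↔ W i c ≠ 0 := by simp [suppW]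

variable {W : Matrix (Fin d) (Fin d) ℝ}

lemma row_inner (hW : IsWeighing 4 W) (i j : Fin d) :
    ∑ c, W i c * W j c = if i = j then (4:ℝ) else 0 := by
  have h := congrFun (congrFun hW.2 i) j
  simp only [Matrix.mul_apply, Matrix.transpose_apply, Matrix.smul_apply,
    Matrix.one_apply, smul_eq_mul] at h
  rw [h]; split <;> norm_num

lemma transpose_weighing (hW : IsWeighing 4 W) : Wᵀ * W = (4:ℝ) • 1 := by
  have h1 : W * ((4:ℝ)⁻¹ • Wᵀ) = 1 := by
    rw [Matrix.mul_smul, hW.2, smul_smul]; norm_num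
  have h2 := mul_eq_one_comm.mp h1
  rw [Matrix.smul_mul] at h2
  calc Wᵀ * W = (4:ℝ) • ((4:ℝ)⁻¹ • (Wᵀ * W)) := by rw [smul_smul]; norm_num
  _ = (4:ℝ) • 1 := by rw [h2]

lemma col_inner (hW : IsWeighing 4 W) (i j : Fin d) :
    ∑ c, W c i * W c j = if i = j then (4:ℝ) else 0 := by
  have h := congrFun (congrFun (transpose_weighing hW) i) j
  simp only [Matrix.mul_apply, Matrix.transpose_apply, Matrix.smul_apply,
    Matrix.one_apply, smul_eq_mul] at h
  rw [h]; split <;> norm_num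

lemma term_ite (hW : IsWeighing 4 W) (i c : Fin d) :
    W i c * W i c = if W i c ≠ 0 then (1:ℝ) else 0 := by
  rcases hW.1 i c with h | h | h <;> norm_num [h]

lemma suppW_card (hW : IsWeighing 4 W) (i : Fin d) : (suppW W i).card = 4 := by
  have h := row_inner hW i i
  rw [if_pos rfl] at h
  have h2 : ∑ c, (if W i c ≠ 0 then (1:ℝ) else 0) = 4 := by
    rw [← h]; exact Finset.sum_congr rfl fun c _ => (term_ite hW i c).symm
  rw [Finset.sum_boole] at h2
  exact_mod_cast h2

lemma col_card (hW : IsWeighing 4 W) (c : Fin d) :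
    (Finset.univ.filter fun i => W i c ≠ 0).card = 4 := by
  have h := col_inner hW c c
  rw [if_pos rfl] at h
  have h2 : ∑ i, (if W i c ≠ 0 then (1:ℝ) else 0) = 4 := by
    rw [← h]; exact Finset.sum_congr rfl fun i _ => (term_ite hW i c).symm
  rw [Finset.sum_boole] at h2
  exact_mod_cast h2

lemma inter_even (hW : IsWeighing 4 W) {i j : Fin d} (hij : i ≠ j) :
    Even ((suppW W i ∩ suppW W j).card) := by
  have h0 : ∑ c, W i c * W j c = 0 := by rw [row_inner hW, if_neg hij]
  set I := suppW W i ∩ suppW W j with hI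
  have hsub : ∑ c ∈ I, W i c * W j c = 0 := by
    rw [← h0]
    apply Finset.sum_subset (Finset.subset_univ I)
    intro c _ hc
    have hor : W i c = 0 ∨ W j c = 0 := by
      by_contra hcon; push_neg at hcon
      exact hc (Finset.mem_inter.mpr ⟨mem_suppW.mpr hcon.1, mem_suppW.mpr hcon.2⟩)
    rcases hor with h | h <;> simp [h]
  have hterm : ∀ c ∈ I, W i c * W j c = 1 ∨ W i c * W j c = -1 := by
    intro c hc
    rw [hI, Finset.mem_inter, mem_suppW, mem_suppW] at hc
    rcases hW.1 i c with h1 | h1 | h1 <;> rcases hW.1 j c with h2 | h2 | h2 <;>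
      first
        | (exact absurd h1 hc.1)
        | (exact absurd h2 hc.2)
        | (norm_num [h1, h2])
  set p : Fin d → Prop := fun c => W i c * W j c = 1 with hp
  rw [← Finset.sum_filter_add_sum_filter_not I p] at hsub
  have hP : ∑ c ∈ I.filter p, W i c * W j c = ((I.filter p).card : ℝ) := by
    rw [Finset.sum_congr rfl (fun c hc => (Finset.mem_filter.mp hc).2),
      Finset.sum_const, nsmul_eq_mul, mul_one]
  have hN : ∑ c ∈ I.filter (fun c => ¬ p c), W i c * W j c
      = -(((I.filter fun c => ¬ p c).card : ℝ)) := by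
    have : ∀ c ∈ I.filter (fun c => ¬ p c), W i c * W j c = -1 := by
      intro c hc
      rcases Finset.mem_filter.mp hc with ⟨hcI, hcnp⟩
      rcases hterm c hcI with h | h
      · exact absurd h hcnp
      · exact h
    rw [Finset.sum_congr rfl this, Finset.sum_const, nsmul_eq_mul, mul_neg_one]
  rw [hP, hN] at hsub
  have hcards : (I.filter p).card = (I.filter fun c => ¬ p c).card := by
    have : ((I.filter p).card : ℝ) = ((I.filter fun c => ¬ p c).card : ℝ) := by linarith
    exact_mod_cast this
  have hsplit := Finset.card_filter_add_card_filter_not (s := I) p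
  exact ⟨(I.filter p).card, by omega⟩

lemma supp_eq_of_inter (hW : IsWeighing 4 W) {i j : Fin d}
    (h4 : (suppW W i ∩ suppW W j).card = 4) : suppW W i = suppW W j := by
  have h1 : suppW W i ∩ suppW W j = suppW W i :=
    Finset.eq_of_subset_of_card_le Finset.inter_subset_left
      (by rw [suppW_card hW, h4])
  have h2 : suppW W i ∩ suppW W j = suppW W j :=
    Finset.eq_of_subset_of_card_le Finset.inter_subset_right
      (by rw [suppW_card hW, h4])
  exact h1.symm.trans h2



lemma no_W5 : ¬ ∃ W : Matrix (Fin 5) (Fin 5) ℝ, IsWeighing (4:ℝ) W := by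
  rintro ⟨W, hW⟩
  have hall : ∀ j, suppW W j = suppW W 0 := by
    intro j
    by_cases hj : j = (0 : Fin 5)
    · rw [hj]
    · apply supp_eq_of_inter hW
      have hiu : (suppW W j ∩ suppW W 0).card + (suppW W j ∪ suppW W 0).card = 8 := by
        rw [Finset.card_inter_add_card_union, suppW_card hW, suppW_card hW]
      have hu : (suppW W j ∪ suppW W 0).card ≤ 5 := by
        simpa using Finset.card_le_univ (suppW W j ∪ suppW W 0)
      have hle : (suppW W j ∩ suppW W 0).card ≤ 4 := by
        have h := Finset.card_le_card
          (Finset.inter_subset_left (s₁ := suppW W j) (s₂ := suppW W 0))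
        rwa [suppW_card hW] at h
      obtain ⟨r, hr⟩ := inter_even hW hj
      omega
  have hnotall : ∃ c : Fin 5, c ∉ suppW W 0 := by
    by_contra hcon; push_neg at hcon
    have : (Finset.univ : Finset (Fin 5)) ⊆ suppW W 0 := fun c _ => hcon c
    have := Finset.card_le_card this
    rw [suppW_card hW] at this
    simp at this
  obtain ⟨c, hc⟩ := hnotall
  have h4 := col_card hW c
  have h0 : (Finset.univ.filter fun i => W i c ≠ 0) = ∅ := by
    rw [Finset.filter_eq_empty_iff]
    intro i _
    intro hne
    exact hc (hall i ▸ mem_suppW.mpr hne)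
  rw [h0] at h4
  simp at h4

end Stmt18Aux

namespace Stmt18Aux
open Finset

section Nine
variable {W : Matrix (Fin 9) (Fin 9) ℝ}

lemma inter_le_four (hW : IsWeighing (4:ℝ) W) (i j : Fin 9) :
    (suppW W i ∩ suppW W j).card ≤ 4 := by
  have h := Finset.card_le_card
    (Finset.inter_subset_left (s₁ := suppW W i) (s₂ := suppW W j))
  rwa [suppW_card hW] at h

lemma count16 (hW : IsWeighing (4:ℝ) W) (i : Fin 9) :
    ∑ j, (suppW W i ∩ suppW W j).card = 16 := by
  have hset : ∀ j : Fin 9, suppW W i ∩ suppW W j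
      = (suppW W i).filter (fun c => W j c ≠ 0) := by
    intro j
    ext c
    simp only [suppW, Finset.mem_inter, Finset.mem_filter, Finset.mem_univ, true_and]
  calc ∑ j, (suppW W i ∩ suppW W j).card
      = ∑ j, ∑ c ∈ suppW W i, (if W j c ≠ 0 then 1 else 0) := by
        refine Finset.sum_congr rfl fun j _ => ?_
        rw [hset j, Finset.card_filter]
    _ = ∑ c ∈ suppW W i, ∑ j, (if W j c ≠ 0 then 1 else 0) := Finset.sum_comm
    _ = ∑ c ∈ suppW W i, (Finset.univ.filter fun j => W j c ≠ 0).card := by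
        refine Finset.sum_congr rfl fun c _ => ?_
        rw [Finset.card_filter]
    _ = ∑ c ∈ suppW W i, 4 := by
        refine Finset.sum_congr rfl fun c _ => col_card hW c
    _ = 16 := by rw [Finset.sum_const, suppW_card hW]; norm_num

lemma count_parts (hW : IsWeighing (4:ℝ) W) (i : Fin 9) :
    (Finset.univ.filter fun k => suppW W k = suppW W i).card + 1
      = (Finset.univ.filter fun k => suppW W i ∩ suppW W k = ∅).card := by
  classical
  have hqp : ∀ k : Fin 9, suppW W i ∩ suppW W k = ∅ → ¬ suppW W k = suppW W i := by
    intro k hqk hpk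
    have h4 := suppW_card hW i
    have hii : suppW W i ∩ suppW W k = suppW W i := by
      rw [hpk]; exact Finset.inter_self _
    rw [hqk] at hii
    rw [← hii] at h4
    simp at h4
  have h16 := count16 hW i
  rw [← Finset.sum_filter_add_sum_filter_not Finset.univ
    (fun k => suppW W k = suppW W i) (fun k => (suppW W i ∩ suppW W k).card)] at h16
  rw [← Finset.sum_filter_add_sum_filter_not
    (Finset.univ.filter fun k => ¬ suppW W k = suppW W i)
    (fun k => suppW W i ∩ suppW W k = ∅)
    (fun k => (suppW W i ∩ suppW W k).card)] at h16
  have hA : ∑ k ∈ Finset.univ.filter (fun k => suppW W k = suppW W i),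
      (suppW W i ∩ suppW W k).card
      = 4 * (Finset.univ.filter fun k => suppW W k = suppW W i).card := by
    rw [Finset.sum_congr rfl (g := fun _ => 4) fun k hk => ?_]
    · rw [Finset.sum_const, smul_eq_mul, mul_comm]
    · have hpk := (Finset.mem_filter.mp hk).2
      rw [hpk, Finset.inter_self]
      exact suppW_card hW i
  have hC : ∑ k ∈ (Finset.univ.filter fun k => ¬ suppW W k = suppW W i).filter
      (fun k => suppW W i ∩ suppW W k = ∅), (suppW W i ∩ suppW W k).card = 0 := by
    refine Finset.sum_eq_zero fun k hk => ?_
    rw [(Finset.mem_filter.mp hk).2]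
    simp
  have hB : ∑ k ∈ (Finset.univ.filter fun k => ¬ suppW W k = suppW W i).filter
      (fun k => ¬ suppW W i ∩ suppW W k = ∅), (suppW W i ∩ suppW W k).card
      = 2 * ((Finset.univ.filter fun k => ¬ suppW W k = suppW W i).filter
          (fun k => ¬ suppW W i ∩ suppW W k = ∅)).card := by
    rw [Finset.sum_congr rfl (g := fun _ => 2) fun k hk => ?_]
    · rw [Finset.sum_const, smul_eq_mul, mul_comm]
    · rcases Finset.mem_filter.mp hk with ⟨hk1, hqk⟩
      have hpk : ¬ suppW W k = suppW W i := (Finset.mem_filter.mp hk1).2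
      have hik : i ≠ k := by
        intro h; exact hpk (by rw [h])
      have heven := inter_even hW hik
      have hle := inter_le_four hW i k
      have hne4 : (suppW W i ∩ suppW W k).card ≠ 4 := by
        intro h4
        exact hpk (supp_eq_of_inter hW h4).symm
      have hne0 : (suppW W i ∩ suppW W k).card ≠ 0 := by
        intro h0
        exact hqk (Finset.card_eq_zero.mp h0)
      obtain ⟨r, hr⟩ := heven
      show (suppW W i ∩ suppW W k).card = 2
      omega
  rw [hA, hC, hB] at h16
  have hcard1 := Finset.card_filter_add_card_filter_not
    (s := (Finset.univ : Finset (Fin 9))) (fun k => suppW W k = suppW W i)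
  have hcard2 := Finset.card_filter_add_card_filter_not
    (s := Finset.univ.filter fun k => ¬ suppW W k = suppW W i)
    (fun k => suppW W i ∩ suppW W k = ∅)
  have hqfilter : (Finset.univ.filter fun k => ¬ suppW W k = suppW W i).filter
      (fun k => suppW W i ∩ suppW W k = ∅)
      = Finset.univ.filter (fun k => suppW W i ∩ suppW W k = ∅) := by
    rw [Finset.filter_filter]
    ext k
    simp only [Finset.mem_filter, Finset.mem_univ, true_and]
    exact ⟨fun h => h.2, fun h => ⟨hqp k h, h⟩⟩
  rw [hqfilter] at hcard2
  have hcu : (Finset.univ : Finset (Fin 9)).card = 9 := by simp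
  rw [hcu] at hcard1
  omega

lemma disj_class (hW : IsWeighing (4:ℝ) W) {i j : Fin 9}
    (hdisj : suppW W i ∩ suppW W j = ∅) :
    (Finset.univ.filter fun k => suppW W i ∩ suppW W k = ∅)
      = Finset.univ.filter fun k => suppW W k = suppW W j := by
  ext k
  simp only [Finset.mem_filter, Finset.mem_univ, true_and]
  constructor
  · intro hk
    by_cases hkj : k = j
    · rw [hkj]
    · apply supp_eq_of_inter hW
      have hsub : suppW W k ∪ suppW W j ⊆ Finset.univ \ suppW W i := by
        intro c hc
        rw [Finset.mem_sdiff]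
        refine ⟨Finset.mem_univ c, fun hci => ?_⟩
        rcases Finset.mem_union.mp hc with h | h
        · have : c ∈ suppW W i ∩ suppW W k := Finset.mem_inter.mpr ⟨hci, h⟩
          rw [hk] at this; simp at this
        · have : c ∈ suppW W i ∩ suppW W j := Finset.mem_inter.mpr ⟨hci, h⟩
          rw [hdisj] at this; simp at this
      have hu : (suppW W k ∪ suppW W j).card ≤ 5 := by
        have h1 := Finset.card_le_card hsub
        rw [Finset.card_sdiff_of_subset (Finset.subset_univ _), suppW_card hW] at h1
        simpa using h1
      have hiu : (suppW W k ∩ suppW W j).card + (suppW W k ∪ suppW W j).card = 8 := by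
        rw [Finset.card_inter_add_card_union, suppW_card hW, suppW_card hW]
      have hle := inter_le_four hW k j
      obtain ⟨r, hr⟩ := inter_even hW hkj
      omega
  · intro hk
    rw [hk]
    exact hdisj

lemma no_W9 : ¬ ∃ W : Matrix (Fin 9) (Fin 9) ℝ, IsWeighing (4:ℝ) W := by
  rintro ⟨W, hW⟩
  have h0 := count_parts hW 0
  have hne : (Finset.univ.filter fun k => suppW W 0 ∩ suppW W k = ∅).Nonempty := by
    rw [← Finset.card_pos]
    omega
  obtain ⟨j, hj⟩ := hne
  have hdisj : suppW W 0 ∩ suppW W j = ∅ := (Finset.mem_filter.mp hj).2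
  rw [disj_class hW hdisj] at h0
  have hdisj' : suppW W j ∩ suppW W 0 = ∅ := by rw [Finset.inter_comm]; exact hdisj
  have h2 := count_parts hW j
  rw [disj_class hW hdisj'] at h2
  omega

end Nine

end Stmt18Aux


/-- for `d ∈ {5, 9}` there is no weighing matrix of order `d` and
weight `4`. -/
theorem stmt18 :
    (¬∃ W : Matrix (Fin 5) (Fin 5) ℝ, IsWeighing (4 : ℝ) W) ∧
    (¬∃ W : Matrix (Fin 9) (Fin 9) ℝ, IsWeighing (4 : ℝ) W) := by
  exact ⟨Stmt18Aux.no_W5, Stmt18Aux.no_W9⟩
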